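/- Let A ∈ ℤ^{d×n} be of rank d with columns a₁,…,aₙ, let b ∈ ℝⁿ, let ω ∈ Ω_{A,b}⁺, and let x* ∈ ℒ_{A,b}⁺ be the unique point with A·x* = ω. Then the unique θ* ∈ ℝ^d solving Aᵀθ* = arccos(x*) + πb/2 (arccos applied coordinatewise) satisfies A·φ_{A,b}(θ*) = ω, and the Jacobian matrix −A · diag( sin(a₁·θ* − b₁π/2), …, sin(aₙ·θ* − bₙπ/2) ) · Aᵀ is negative definite; hence θ* is a linearly stable steady state of the dynamical system θ̇ = −A·φ_{A,b}(θ) + ω. -/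

import Mathlib

noncomputable section


/-- The real row span of the integer matrix `A`. -/
def rowSpanR {d n : ℕ} (A : Matrix (Fin d) (Fin n) ℤ) : Submodule ℝ (Fin n → ℝ) :=
  Submodule.span ℝ (Set.range fun i : Fin d => fun j : Fin n => (A i j : ℝ))

/-- The positive part `ℒ_{A,b}⁺ = cos(L_{A,b} ∩ (0,π)ⁿ)` of the Lissajous variety. -/
def LisPlus {d n : ℕ} (A : Matrix (Fin d) (Fin n) ℤ) (b : Fin n → ℝ) :
    Set (Fin n → ℝ) :=
  (fun x j => Real.cos (x j)) ''
    ({y | ∃ x ∈ rowSpanR A, y = x - (Real.pi / 2) • b} ∩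
     {x | ∀ j, x j ∈ Set.Ioo 0 Real.pi})

/-- `Ω_{A,b}⁺ = A(ℒ_{A,b}⁺)`. -/
def OmegaPlus {d n : ℕ} (A : Matrix (Fin d) (Fin n) ℤ) (b : Fin n → ℝ) :
    Set (Fin d → ℝ) :=
  (fun x i => ∑ j, (A i j : ℝ) * x j) '' LisPlus A b


/-! On the open cube the phases `a_ℓ·θ* − b_ℓπ/2` are exactly `arccos x*_ℓ ∈ (0, π)`, so the cosine
returns `x*` (whence `A φ(θ*) = A x* = ω`) and the sines `s_ℓ` are positive. The Jacobian is then
`−A diag(s) Aᵀ`, which is negative definite because `A` has a right inverse over `ℚ`, so its rows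
stay linearly independent over `ℝ`. -/

open Matrix Real Finset

namespace Matrix

variable {m n K : Type*} [Fintype m] [Fintype n]

theorem exists_mul_eq_one_of_rank_eq_card [DecidableEq m] [Field K] {A : Matrix m n K}
    (hA : A.rank = Fintype.card m) : ∃ B : Matrix n m K, A * B = 1 := by
  refine mulVec_surjective_iff_exists_right_inverse.mp fun y => ?_
  have hrange : LinearMap.range A.mulVecLin = ⊤ :=
    Submodule.eq_top_of_finrank_eq (by rw [← rank, hA, Module.finrank_fintype_fun_eq_card])
  exact LinearMap.range_eq_top.mp hrange y

theorem vecMul_map_injective_of_rank_eq_card {L : Type*} [Field K] [Semiring L] (f : K →+* L)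
    {A : Matrix m n K} (hA : A.rank = Fintype.card m) : Function.Injective (A.map f).vecMul := by
  classical
  obtain ⟨B, hAB⟩ := exists_mul_eq_one_of_rank_eq_card hA
  have hAB' : A.map f * B.map f = 1 := by
    rw [← Matrix.map_mul, hAB, Matrix.map_one _ f.map_zero f.map_one]
  refine Function.LeftInverse.injective (g := fun w => w ᵥ* B.map f) fun v => ?_
  simp only [vecMul_vecMul, hAB', vecMul_one]

variable [DecidableEq n]

theorem posDef_mul_diagonal_mul_transpose {A : Matrix m n ℝ} (hA : Function.Injective A.vecMul)
    {s : n → ℝ} (hs : ∀ l, 0 < s l) : (A * diagonal s * Aᵀ).PosDef := by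
  simpa [conjTranspose_eq_transpose_of_trivial] using
    (PosDef.diagonal hs).mul_mul_conjTranspose_same hA

theorem dotProduct_mul_diagonal_mul_transpose_mulVec [CommSemiring K]
    (A : Matrix m n K) (s : n → K) (v : m → K) :
    v ⬝ᵥ (A * diagonal s * Aᵀ) *ᵥ v = ∑ i, ∑ i', v i * (∑ l, A i l * s l * A i' l) * v i' := by
  simp only [dotProduct, mulVec, mul_apply (M := A * diagonal s), mul_diagonal, transpose_apply,
    mul_sum, sum_mul, mul_assoc]

end Matrix

theorem mem_Ioo_of_mem_LisPlus {d n : ℕ} {A : Matrix (Fin d) (Fin n) ℤ} {b x : Fin n → ℝ}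
    (hx : x ∈ LisPlus A b) (l : Fin n) : x l ∈ Set.Ioo (-1) 1 := by
  obtain ⟨y, ⟨-, hy⟩, rfl⟩ := hx
  obtain ⟨hy0, hyπ⟩ := hy l
  constructor
  · simpa using cos_lt_cos_of_nonneg_of_le_pi hy0.le le_rfl hyπ
  · simpa using cos_lt_cos_of_nonneg_of_le_pi le_rfl hyπ.le hy0

theorem stmt14_general {d n : ℕ} (A : Matrix (Fin d) (Fin n) ℤ)
    (hrank : (A.map fun z => (z : ℚ)).rank = d) (b : Fin n → ℝ) (ω : Fin d → ℝ)
    (xstar : Fin n → ℝ) (hx : xstar ∈ LisPlus A b)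
    (hAx : ∀ i, ∑ j, (A i j : ℝ) * xstar j = ω i)
    (θstar : Fin d → ℝ)
    (hθ : ∀ l, ∑ i, (A i l : ℝ) * θstar i =
      Real.arccos (xstar l) + Real.pi * b l / 2) :
    (∀ i, ∑ l, (A i l : ℝ) *
        Real.cos ((∑ i', (A i' l : ℝ) * θstar i') - b l * Real.pi / 2) = ω i) ∧
    ∀ v : Fin d → ℝ, v ≠ 0 →
      ∑ i, ∑ i', v i * (-(∑ l, (A i l : ℝ) *
        Real.sin ((∑ i'', (A i'' l : ℝ) * θstar i'') - b l * Real.pi / 2) *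
        (A i' l : ℝ))) * v i' < 0 := by
  have hphase (l : Fin n) : ∑ i, (A i l : ℝ) * θstar i - b l * π / 2 = arccos (xstar l) := by
    rw [hθ l]; ring
  have hxstar := mem_Ioo_of_mem_LisPlus hx
  refine ⟨fun i => ?_, fun v hv => ?_⟩
  · simpa only [hphase, cos_arccos (hxstar _).1.le (hxstar _).2.le] using hAx i
  have hsin (l : Fin n) : 0 < sin (∑ i, (A i l : ℝ) * θstar i - b l * π / 2) := by
    rw [hphase]
    exact sin_pos_of_pos_of_lt_pi (arccos_pos.2 (hxstar l).2) (arccos_lt_pi.2 (hxstar l).1)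
  have hinj := vecMul_map_injective_of_rank_eq_card (Rat.castHom ℝ)
    (hrank.trans (Fintype.card_fin d).symm)
  simp only [Matrix.map_map, Function.comp_def, eq_ratCast, Rat.cast_intCast] at hinj
  have hquad := (posDef_mul_diagonal_mul_transpose hinj hsin).dotProduct_mulVec_pos hv
  rw [star_trivial, dotProduct_mul_diagonal_mul_transpose_mulVec] at hquad
  simpa only [mul_neg, neg_mul, sum_neg_distrib, Left.neg_neg_iff, map_apply] using hquad

/-- Proposition 5.4: for `ω ∈ Ω_{A,b}⁺` and `x*` the unique point of
`ℒ_{A,b}⁺ ∩ {Ax = ω}`, the solution `θ*` of `Aᵀθ* = arccos(x*) + πb/2` is a steady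
state of `θ̇ = -A φ_{A,b}(θ) + ω` and the Jacobian there is negative definite. -/
theorem stmt14 {d n : ℕ} (A : Matrix (Fin d) (Fin n) ℤ)
    (hrank : (A.map fun z => (z : ℚ)).rank = d) (b : Fin n → ℝ) (ω : Fin d → ℝ)
    (hω : ω ∈ OmegaPlus A b)
    (xstar : Fin n → ℝ) (hx : xstar ∈ LisPlus A b)
    (hAx : ∀ i, ∑ j, (A i j : ℝ) * xstar j = ω i)
    (θstar : Fin d → ℝ)
    (hθ : ∀ l, ∑ i, (A i l : ℝ) * θstar i =
      Real.arccos (xstar l) + Real.pi * b l / 2) :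
    (∀ i, ∑ l, (A i l : ℝ) *
        Real.cos ((∑ i', (A i' l : ℝ) * θstar i') - b l * Real.pi / 2) = ω i) ∧
    ∀ v : Fin d → ℝ, v ≠ 0 →
      ∑ i, ∑ i', v i * (-(∑ l, (A i l : ℝ) *
        Real.sin ((∑ i'', (A i'' l : ℝ) * θstar i'') - b l * Real.pi / 2) *
        (A i' l : ℝ))) * v i' < 0 :=
  stmt14_general A hrank b ω xstar hx hAx θstar hθ
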